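/- For the Hata skew product with p = 1/2 and for every n ≥ 1, every measurable A ⊆ Ω and every Borel B ⊆ [0,1]: μ̃(J̃_n ∩ R̃^± ∩ T̃^{-n}(A×B)) = c_n · P(A) · μ(B ∩ I_0^±), and consequently μ̃(J̃_n ∩ T̃^{-n}(A×B)) = c_n · P(A) · μ(B ∩ J), where c_n = Σ_{k≥1} (2^{k+1}−1)·2^{-k}·P(φ^W_{−k} = n). -/

import Mathlib

open MeasureTheory Set
open scoped ENNReal

noncomputable section

/-- First Hata map: `τ₁(x) = x/2` on `(0,1/2)`, `τ₁(x) = 2x-1` on `(1/2,1)`. -/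
def tau1 : ℝ → ℝ := fun x => if x < 1/2 then x/2 else 2*x - 1

/-- Second Hata map: `τ₂(x) = 2x` on `(0,1/2)`, `τ₂(x) = (x+1)/2` on `(1/2,1)`. -/
def tau2 : ℝ → ℝ := fun x => if x < 1/2 then 2*x else (x+1)/2

/-- The interval `I_k^- = (2^{-(k+2)}, 2^{-(k+1)})`. -/
def Im (k : ℕ) : Set ℝ := Set.Ioo ((1:ℝ)/2^(k+2)) ((1:ℝ)/2^(k+1))

/-- The interval `I_k^+ = (1-2^{-(k+1)}, 1-2^{-(k+2)})`. -/
def Ip (k : ℕ) : Set ℝ := Set.Ioo (1 - (1:ℝ)/2^(k+1)) (1 - (1:ℝ)/2^(k+2))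

/-- The density `h` of the invariant measure: `h = 2^{k+1}-1` on `I_k^- ∪ I_k^+`. -/
def hataDensity : ℝ → ℝ≥0∞ :=
  fun x => ∑' k : ℕ, ((2:ℝ≥0∞)^(k+1) - 1) * Set.indicator (Im k ∪ Ip k) (fun _ => (1:ℝ≥0∞)) x

/-- The invariant measure `μ` of the Hata map, `μ(dx) = h(x) dx`. -/
def muH : Measure ℝ := volume.withDensity hataDensity

/-- The sample space of coin flips: `Ω = {1,2}^ℕ`, coded by `Bool` (`true` ↦ `τ₁`). -/
abbrev Om : Type := ℕ → Bool

/-- Selection of the map according to a coin flip. -/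
def sel : Bool → ℝ → ℝ := fun b => if b then tau1 else tau2

/-- The skew product `T̃(ω,x) = (θω, τ_{ω₁}(x))`, with `θ` the left shift. -/
def Ttilde : Om × ℝ → Om × ℝ := fun q => (fun n => q.1 (n+1), sel (q.1 0) q.2)

/-- The junction `J = (1/4,3/4)`. -/
def J : Set ℝ := Set.Ioo (1/4 : ℝ) (3/4)

/-- The ray `R^- = (0,1/4)`. -/
def Rm : Set ℝ := Set.Ioo (0 : ℝ) (1/4)

/-- The ray `R^+ = (3/4,1)`. -/
def Rp : Set ℝ := Set.Ioo (3/4 : ℝ) 1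

/-- `J̃ = Ω × J`. -/
def Jt : Set (Om × ℝ) := Set.univ ×ˢ J

/-- `J̃_n = J̃ᶜ ∩ {φ_{J̃} = n}`: the set of points outside `J̃` whose first entrance time
to `J̃` equals `n`. -/
def Jn (n : ℕ) : Set (Om × ℝ) :=
  {q | q ∉ Jt ∧ Ttilde^[n] q ∈ Jt ∧ ∀ m : ℕ, 1 ≤ m → m < n → Ttilde^[m] q ∉ Jt}

/-- The simple symmetric random walk driven by the coin flips:
`W_n = ε₁ + ⋯ + ε_n` with `ε_i = ±1`. -/
def W (ω : Om) (n : ℕ) : ℤ := ∑ i ∈ Finset.range n, (if ω i then (1:ℤ) else -1)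

/-- The event that the first hitting time of `-k` by the random walk equals `n`,
i.e. `{φ^W_{-k} = n}`. -/
def hitW (k n : ℕ) : Set Om :=
  {ω : Om | W ω n = -(k:ℤ) ∧ ∀ m : ℕ, 1 ≤ m → m < n → W ω m ≠ -(k:ℤ)}

/-- `c_n = ∑_{k≥1} (2^{k+1}-1)·2^{-k}·P(φ^W_{-k} = n)`. -/
def cH (P : Measure Om) (n : ℕ) : ℝ≥0∞ :=
  ∑' k : ℕ, (((2:ℝ≥0∞)^(k+2) - 1) / 2^(k+1)) * P (hitW (k+1) n)

/-!
A point `x ∈ I_k^-` with `k ≥ 1` lies below `1/2`, where `τ₁` halves and `τ₂` doubles, so its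
orbit climbs the ladder of intervals `I_j^-` with index `k + W_m`: it first enters `J` (through
`I_0^-`) exactly when the walk first hits `-k`, and then sits at `2^k x`. The event
`{φ^W_{-k} = n}` depends on the first `n` flips only, hence is independent of the shifted sequence,
and `x ↦ 2^k x` scales Lebesgue measure by `2^k`; together with the density `2^{k+1} - 1` on
`I_k^-` this produces the weight `(2^{k+1} - 1) 2^{-k} P(φ^W_{-k} = n)` of `c_n`. The ray `R^+` is
the mirror image of `R^-` under `(ω, x) ↦ (ω̄, 1 - x)`, which preserves `μ̃` and commutes with
`T̃` along orbits avoiding `1/2`. Since `μ` is carried by `⋃ₖ I_k^- ∪ I_k^+`, the last identity is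
the sum of the first two.
-/

/-- `I_z^-` for every integer `z`, so that multiplication by `2^{-w}` shifts the index by `w`. -/
def ImZ (z : ℤ) : Set ℝ := Ioo ((2:ℝ) ^ (-(z + 2))) ((2:ℝ) ^ (-(z + 1)))

lemma Im_eq_ImZ (k : ℕ) : Im k = ImZ k := by
  simp only [Im, ImZ, one_div, ← zpow_natCast, ← zpow_neg]
  push_cast; rfl

lemma mul_mem_ImZ_iff (w z : ℤ) {x : ℝ} : (2:ℝ) ^ (-w) * x ∈ ImZ (z + w) ↔ x ∈ ImZ z := by
  have h2w : (0:ℝ) < 2 ^ (-w) := by positivity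
  have hsplit : ∀ c : ℤ, (2:ℝ) ^ (-(z + w + c)) = 2 ^ (-w) * 2 ^ (-(z + c)) := fun c => by
    rw [← zpow_add₀ two_ne_zero]; ring_nf
  simp only [ImZ, mem_Ioo, hsplit, mul_lt_mul_iff_right₀ h2w]

lemma ImZ_eq_of_mem {a b : ℤ} {x : ℝ} (ha : x ∈ ImZ a) (hb : x ∈ ImZ b) : a = b := by
  have hlt : ∀ {a b : ℤ}, x ∈ ImZ a → x ∈ ImZ b → b ≤ a := fun ha hb => by
    have := (zpow_lt_zpow_iff_right₀ (by norm_num : (1:ℝ) < 2)).mp (ha.1.trans hb.2)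
    omega
  exact le_antisymm (hlt hb ha) (hlt ha hb)

lemma lt_half_of_mem_ImZ {z : ℤ} (hz : 0 ≤ z) {x : ℝ} (hx : x ∈ ImZ z) : x < 1 / 2 := by
  have h : (2:ℝ) ^ (-(z + 1)) ≤ 2 ^ (-1 : ℤ) := zpow_le_zpow_right₀ one_le_two (by omega)
  have h' : (2:ℝ) ^ (-1 : ℤ) = 1 / 2 := by norm_num
  exact hx.2.trans_le (h.trans h'.le)

lemma ImZ_subset_Rm {z : ℤ} (hz : 1 ≤ z) : ImZ z ⊆ Rm := fun x hx => by
  have h : (2:ℝ) ^ (-(z + 1)) ≤ 2 ^ (-2 : ℤ) := zpow_le_zpow_right₀ one_le_two (by omega)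
  have h' : (2:ℝ) ^ (-2 : ℤ) = 1 / 4 := by norm_num
  exact ⟨(zpow_pos two_pos _).trans hx.1, hx.2.trans_le (h.trans h'.le)⟩

lemma ImZ_zero_subset_J : ImZ 0 ⊆ J := fun x hx => by
  norm_num [ImZ] at hx
  exact ⟨hx.1, by linarith [hx.2]⟩

lemma mem_Ip_iff {k : ℕ} {x : ℝ} : x ∈ Ip k ↔ 1 - x ∈ Im k := by
  simp only [Ip, Im, mem_Ioo]
  constructor <;> rintro ⟨h1, h2⟩ <;> constructor <;> linarith

lemma disjoint_J_Rm : Disjoint J Rm :=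
  disjoint_left.mpr fun _ hJ hR => by linarith [hJ.1, hR.2]

lemma disjoint_J_Rp : Disjoint J Rp :=
  disjoint_left.mpr fun _ hJ hR => by linarith [hJ.2, hR.1]

lemma one_sub_mem_J_iff {x : ℝ} : 1 - x ∈ J ↔ x ∈ J := by
  simp only [J, mem_Ioo]
  constructor <;> rintro ⟨h1, h2⟩ <;> constructor <;> linarith

lemma one_sub_mem_Rm_iff {x : ℝ} : 1 - x ∈ Rm ↔ x ∈ Rp := by
  simp only [Rm, Rp, mem_Ioo]
  constructor <;> rintro ⟨h1, h2⟩ <;> constructor <;> linarith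

def hataSupport : Set ℝ := ⋃ k, Im k ∪ Ip k

lemma Im_subset_Iio_half (k : ℕ) : Im k ⊆ Iio (1 / 2) := fun _ hx =>
  lt_half_of_mem_ImZ (Nat.cast_nonneg k) (Im_eq_ImZ k ▸ hx)

lemma Ip_subset_Ioi_half (k : ℕ) : Ip k ⊆ Ioi (1 / 2) := fun x hx => by
  have : 1 - x < 1 / 2 := Im_subset_Iio_half k (mem_Ip_iff.mp hx)
  simp only [mem_Ioi]; linarith

lemma disjoint_Im_Ip (j k : ℕ) : Disjoint (Im j) (Ip k) :=
  disjoint_left.mpr fun x hj hk =>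
    lt_asymm (show x < 1 / 2 from Im_subset_Iio_half j hj)
      (show 1 / 2 < x from Ip_subset_Ioi_half k hk)

lemma Im_zero_subset_J : Im 0 ⊆ J := Im_eq_ImZ 0 ▸ ImZ_zero_subset_J

lemma Ip_zero_subset_J : Ip 0 ⊆ J := fun _ hx =>
  one_sub_mem_J_iff.mp (Im_zero_subset_J (mem_Ip_iff.mp hx))

lemma Im_succ_subset_Rm (k : ℕ) : Im (k + 1) ⊆ Rm :=
  Im_eq_ImZ (k + 1) ▸ ImZ_subset_Rm (by omega)

lemma Ip_succ_subset_Rp (k : ℕ) : Ip (k + 1) ⊆ Rp := fun _ hx =>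
  one_sub_mem_Rm_iff.mp (Im_succ_subset_Rm k (mem_Ip_iff.mp hx))

lemma mem_hataSupport_cases {x : ℝ} (hx : x ∈ hataSupport) :
    x ∈ Im 0 ∪ Ip 0 ∨ (∃ k, x ∈ Im (k + 1)) ∨ ∃ k, x ∈ Ip (k + 1) := by
  obtain ⟨k, hk⟩ := mem_iUnion.mp hx
  rcases k with _ | k
  · exact Or.inl hk
  · exact hk.elim (fun h => Or.inr (Or.inl ⟨k, h⟩)) (fun h => Or.inr (Or.inr ⟨k, h⟩))

lemma disjoint_Rm_Rp : Disjoint Rm Rp :=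
  disjoint_left.mpr fun _ hm hp => by linarith [hm.2, hp.1]

lemma hataDensity_of_mem_Im {k : ℕ} {x : ℝ} (hx : x ∈ Im k) : hataDensity x = 2 ^ (k + 1) - 1 := by
  rw [hataDensity, tsum_eq_single k]
  · rw [indicator_of_mem (mem_union_left _ hx), mul_one]
  · intro j hj
    rw [indicator_of_notMem, mul_zero]
    rintro (hj' | hj')
    · exact hj (by exact_mod_cast ImZ_eq_of_mem (Im_eq_ImZ j ▸ hj') (Im_eq_ImZ k ▸ hx))
    · exact disjoint_left.mp (disjoint_Im_Ip k j) hx hj'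

lemma hataDensity_of_notMem {x : ℝ} (hx : x ∉ hataSupport) : hataDensity x = 0 :=
  ENNReal.tsum_eq_zero.mpr fun k => by
    rw [indicator_of_notMem (fun h => hx (mem_iUnion.mpr ⟨k, h⟩)), mul_zero]

lemma hataDensity_one_sub (x : ℝ) : hataDensity (1 - x) = hataDensity x := by
  have hsymm : ∀ k, 1 - x ∈ Im k ∪ Ip k ↔ x ∈ Im k ∪ Ip k := fun k => by
    rw [mem_union, mem_union, mem_Ip_iff, mem_Ip_iff, sub_sub_cancel, or_comm]
  classical
  simp only [hataDensity, indicator_apply, hsymm]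

lemma measurable_hataDensity : Measurable hataDensity :=
  Measurable.tsum fun _ =>
    measurable_const.mul (measurable_const.indicator (measurableSet_Ioo.union measurableSet_Ioo))

instance : SFinite muH := by unfold muH; infer_instance

lemma muH_compl_hataSupport : muH hataSupportᶜ = 0 := by
  rw [muH, withDensity_apply_eq_zero' measurable_hataDensity.aemeasurable]
  convert measure_empty (μ := volume)
  exact eq_empty_of_forall_notMem fun x hx => hx.1 (hataDensity_of_notMem hx.2)

lemma muH_of_subset_Im {k : ℕ} {S : Set ℝ} (hS : MeasurableSet S) (hSk : S ⊆ Im k) :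
    muH S = (2 ^ (k + 1) - 1) * volume S := by
  rw [muH, withDensity_apply _ hS,
    setLIntegral_congr_fun hS fun x hx => hataDensity_of_mem_Im (hSk hx), setLIntegral_const]

lemma measurePreserving_one_sub_muH : MeasurePreserving (fun x : ℝ => 1 - x) muH muH := by
  refine ⟨by fun_prop, Measure.ext fun S hS => ?_⟩
  rw [Measure.map_apply (by fun_prop) hS, muH, withDensity_apply _ hS,
    withDensity_apply _ (s := (fun x : ℝ => 1 - x) ⁻¹' S) (measurable_const.sub measurable_id hS),
    ← (volume.measurePreserving_sub_left 1).setLIntegral_comp_preimage hS measurable_hataDensity]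
  simp only [hataDensity_one_sub]

lemma two_pow_mul_mem_Im_zero_iff (k : ℕ) {x : ℝ} : (2:ℝ) ^ k * x ∈ Im 0 ↔ x ∈ Im k := by
  have := mul_mem_ImZ_iff (-k) k (x := x)
  rw [neg_neg, zpow_natCast, add_neg_cancel] at this
  rw [Im_eq_ImZ, Im_eq_ImZ, Nat.cast_zero, this]

lemma muH_Im_inter_preimage_mul (k : ℕ) {B : Set ℝ} (hB : MeasurableSet B) :
    muH (Im k ∩ (fun x : ℝ => (2:ℝ) ^ k * x) ⁻¹' B)
      = (2 ^ (k + 1) - 1) / 2 ^ k * muH (B ∩ Im 0) := by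
  have hmul : Measurable fun x : ℝ => (2:ℝ) ^ k * x := measurable_const_mul _
  have hpre : Im k ∩ (fun x : ℝ => (2:ℝ) ^ k * x) ⁻¹' B
      = (fun x : ℝ => (2:ℝ) ^ k * x) ⁻¹' (B ∩ Im 0) := by
    ext x; simp only [mem_inter_iff, mem_preimage, two_pow_mul_mem_Im_zero_iff, and_comm]
  have hBI : MeasurableSet (B ∩ Im 0) := hB.inter measurableSet_Ioo
  rw [hpre, muH_of_subset_Im (hmul hBI) fun x hx => (two_pow_mul_mem_Im_zero_iff k).mp hx.2,
    Real.volume_preimage_mul_left (by positivity), muH_of_subset_Im hBI inter_subset_right,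
    abs_of_pos (by positivity), ENNReal.ofReal_inv_of_pos (by positivity),
    ENNReal.ofReal_pow zero_le_two]
  have h21 : (2:ℝ≥0∞) - 1 = 1 := by
    rw [← one_add_one_eq_two, ENNReal.add_sub_cancel_right ENNReal.one_ne_top]
  rw [zero_add, pow_one, h21, one_mul, div_eq_mul_inv, mul_assoc, ENNReal.ofReal_ofNat]

def prefixCyl (n : ℕ) (g : ℕ → Bool) : Set Om := {ω | ∀ i < n, ω i = g i}

/-- The uniform Bernoulli measure on `Ω`, characterised by its values on cylinders. -/
def IsFairCoin (P : Measure Om) : Prop := ∀ (n : ℕ) (g : ℕ → Bool), P (prefixCyl n g) = (1 / 2) ^ n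

def shift (n : ℕ) (ω : Om) : Om := fun i => ω (i + n)

def padFalse {n : ℕ} (v : Fin n → Bool) : ℕ → Bool := fun i => if h : i < n then v ⟨i, h⟩ else false

lemma measurableSet_prefixCyl (n : ℕ) (g : ℕ → Bool) : MeasurableSet (prefixCyl n g) := by
  simp only [prefixCyl, ofPred_forall]
  exact MeasurableSet.iInter fun i => MeasurableSet.iInter fun _ =>
    measurableSet_eq_fun (measurable_pi_apply i) measurable_const

lemma measurable_shift (n : ℕ) : Measurable (shift n) :=
  measurable_pi_lambda _ fun i => measurable_pi_apply (i + n)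

lemma eq_biUnion_prefixCyl {n : ℕ} {E : Set Om} (hE : DependsOn (· ∈ E) (Iio n)) :
    E = ⋃ v ∈ {v : Fin n → Bool | padFalse v ∈ E}, prefixCyl n (padFalse v) := by
  ext ω
  simp only [mem_iUnion, mem_ofPred_eq, prefixCyl, exists_prop]
  constructor
  · intro hω
    have hpad : ∀ i < n, ω i = padFalse (fun i : Fin n => ω i) i := fun i hi => by
      simp [padFalse, hi]
    exact ⟨_, (hE fun i hi => hpad i hi).mp hω, hpad⟩
  · rintro ⟨v, hv, hω⟩
    exact (hE fun i hi => (hω i hi).symm).mp hv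

lemma measurableSet_of_dependsOn {n : ℕ} {E : Set Om} (hE : DependsOn (· ∈ E) (Iio n)) :
    MeasurableSet E := by
  rw [eq_biUnion_prefixCyl hE]
  exact MeasurableSet.biUnion (to_countable _) fun _ _ => measurableSet_prefixCyl _ _

lemma measure_inter_eq_tsum (μ : Measure Om) {n : ℕ} {E T : Set Om}
    (hE : DependsOn (· ∈ E) (Iio n)) (hT : MeasurableSet T) :
    μ (E ∩ T) = ∑' v : {v : Fin n → Bool | padFalse v ∈ E}, μ (prefixCyl n (padFalse v.1) ∩ T) := by
  conv_lhs => rw [eq_biUnion_prefixCyl hE, iUnion₂_inter]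
  refine measure_biUnion (to_countable _) (fun v _ w _ hvw => ?_)
    fun _ _ => (measurableSet_prefixCyl _ _).inter hT
  refine disjoint_left.mpr fun ω hv hw => hvw (funext fun i => ?_)
  simpa [padFalse] using (hv.1 i i.2).symm.trans (hw.1 i i.2)

lemma ext_of_prefixCyl {μ ν : Measure Om} [IsFiniteMeasure μ]
    (h : ∀ n g, μ (prefixCyl n g) = ν (prefixCyl n g)) : μ = ν := by
  refine ext_of_generate_finite _ generateFrom_measurableCylinders.symm
    isPiSystem_measurableCylinders (fun C hC => ?_) (by simpa [prefixCyl] using h 0 default)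
  obtain ⟨s, S, -, rfl⟩ := (mem_measurableCylinders _).mp hC
  have hs : ∀ i ∈ s, i < s.sup id + 1 := fun i hi => Nat.lt_succ_of_le (Finset.le_sup (f := id) hi)
  have hC : DependsOn (fun ω : Om => ω ∈ cylinder s S) (Iio (s.sup id + 1)) := fun x y hxy => by
    show (s.restrict x ∈ S) = (s.restrict y ∈ S)
    rw [show s.restrict x = s.restrict y from funext fun i => hxy i (hs i i.2)]
  have hsum := fun μ' : Measure Om => measure_inter_eq_tsum μ' hC MeasurableSet.univ
  simp only [inter_univ] at hsum
  simp only [hsum, h]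

lemma IsFairCoin.measurePreserving_not {P : Measure Om} [IsFiniteMeasure P] (hP : IsFairCoin P) :
    MeasurePreserving (fun ω i => !ω i) P P := by
  have hmeas : Measurable fun (ω : Om) i => !ω i := by fun_prop
  refine ⟨hmeas, ext_of_prefixCyl fun n g => ?_⟩
  rw [Measure.map_apply hmeas (measurableSet_prefixCyl n g), hP, ← hP n fun i => !g i]
  congr 1
  ext ω
  simp [prefixCyl, Bool.not_eq_eq_eq_not]

lemma prefixCyl_inter_shift (n m : ℕ) (g g' : ℕ → Bool) :
    prefixCyl n g ∩ shift n ⁻¹' prefixCyl m g'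
      = prefixCyl (n + m) fun i => if i < n then g i else g' (i - n) := by
  ext ω
  simp only [prefixCyl, shift, mem_inter_iff, mem_preimage, mem_ofPred_eq]
  constructor
  · rintro ⟨h1, h2⟩ i hi
    split_ifs with hin
    · exact h1 i hin
    · simpa [Nat.sub_add_cancel (not_lt.mp hin)] using h2 (i - n) (by omega)
  · intro h
    refine ⟨fun i hi => by simpa [hi] using h i (by omega), fun i hi => ?_⟩
    simpa using h (i + n) (by omega)

lemma IsFairCoin.measure_prefixCyl_inter_shift {P : Measure Om} [IsFiniteMeasure P]
    (hP : IsFairCoin P) (n : ℕ) (g : ℕ → Bool) {A : Set Om} (hA : MeasurableSet A) :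
    P (prefixCyl n g ∩ shift n ⁻¹' A) = (1 / 2) ^ n * P A := by
  have hmap : (P.restrict (prefixCyl n g)).map (shift n) = ((1 / 2) ^ n : ℝ≥0∞) • P := by
    refine ext_of_prefixCyl fun m g' => ?_
    rw [Measure.map_apply (measurable_shift n) (measurableSet_prefixCyl m g'),
      Measure.restrict_apply (measurable_shift n (measurableSet_prefixCyl m g')), inter_comm,
      prefixCyl_inter_shift, hP, Measure.smul_apply, hP, smul_eq_mul, pow_add]
  rw [inter_comm, ← Measure.restrict_apply (measurable_shift n hA),
    ← Measure.map_apply (measurable_shift n) hA, hmap, Measure.smul_apply, smul_eq_mul]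

lemma IsFairCoin.measure_inter_shift {P : Measure Om} [IsFiniteMeasure P] (hP : IsFairCoin P)
    {n : ℕ} {E A : Set Om} (hE : DependsOn (· ∈ E) (Iio n)) (hA : MeasurableSet A) :
    P (E ∩ shift n ⁻¹' A) = P E * P A := by
  have hPE := measure_inter_eq_tsum P hE MeasurableSet.univ
  simp only [inter_univ] at hPE
  rw [measure_inter_eq_tsum P hE (measurable_shift n hA), hPE, ← ENNReal.tsum_mul_right]
  simp only [hP.measure_prefixCyl_inter_shift _ _ hA, hP n]

lemma W_zero (ω : Om) : W ω 0 = 0 := Finset.sum_range_zero _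

lemma W_succ (ω : Om) (m : ℕ) : W ω (m + 1) = W ω m + if ω m then 1 else -1 :=
  Finset.sum_range_succ _ _

lemma W_sub_one_le_W_succ (ω : Om) (m : ℕ) : W ω m - 1 ≤ W ω (m + 1) := by
  rw [W_succ]; split_ifs <;> omega

lemma dependsOn_W {n m : ℕ} (hm : m ≤ n) : DependsOn (fun ω : Om => W ω m) (Iio n) :=
  fun _ _ h => Finset.sum_congr rfl fun i hi => by
    rw [h i (lt_of_lt_of_le (Finset.mem_range.mp hi) hm)]

lemma dependsOn_hitW (k n : ℕ) : DependsOn (· ∈ hitW k n) (Iio n) := fun ω ω' h => by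
  simp only [hitW, mem_ofPred_eq, dependsOn_W le_rfl h]
  congr! 4 with m _ hm
  rw [show W ω m = W ω' m from dependsOn_W hm.le h]

lemma neg_le_W_of_forall_lt {k : ℕ} {ω : Om} {m : ℕ} (h : ∀ j < m, -(k:ℤ) < W ω j) :
    -(k:ℤ) ≤ W ω m := by
  rcases m with _ | m
  · rw [W_zero]; omega
  · linarith [W_sub_one_le_W_succ ω m, h m m.lt_succ_self]

/-- A `±1` walk from `0` cannot pass below `-k` without visiting `-k`. -/
lemma forall_lt_of_mem_hitW {k n : ℕ} (hk : 1 ≤ k) {ω : Om} (hω : ω ∈ hitW k n) :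
    ∀ j < n, -(k:ℤ) < W ω j := by
  intro j
  induction j with
  | zero => intro _; rw [W_zero]; omega
  | succ j ih =>
    intro hj
    have := W_sub_one_le_W_succ ω j
    have := hω.2 (j + 1) (by omega) hj
    have := ih (by omega)
    omega

lemma sel_of_lt_half (b : Bool) {y : ℝ} (hy : y < 1 / 2) :
    sel b y = (2:ℝ) ^ (-(if b then 1 else -1 : ℤ)) * y := by
  cases b
  · show tau2 y = _
    rw [tau2, if_pos hy]; norm_num
  · show tau1 y = _
    rw [tau1, if_pos hy]; norm_num; ring

lemma Ttilde_shift (ω : Om) (m : ℕ) (y : ℝ) :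
    Ttilde (shift m ω, y) = (shift (m + 1) ω, sel (ω m) y) := by
  simp only [Ttilde, shift, zero_add, Prod.mk.injEq, and_true]
  funext i; rw [add_right_comm]; rfl

/-- Below `1/2` the two maps are `x ↦ x/2` and `x ↦ 2x`. -/
lemma Ttilde_iterate_of_lt_half {ω : Om} {x : ℝ} {m : ℕ}
    (h : ∀ j < m, (2:ℝ) ^ (-W ω j) * x < 1 / 2) :
    Ttilde^[m] (ω, x) = (shift m ω, (2:ℝ) ^ (-W ω m) * x) := by
  induction m with
  | zero => rw [Function.iterate_zero_apply, W_zero, neg_zero, zpow_zero, one_mul]; rfl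
  | succ m ih =>
    rw [Function.iterate_succ_apply', ih fun j hj => h j (by omega), Ttilde_shift,
      sel_of_lt_half _ (h m m.lt_succ_self), W_succ, neg_add, zpow_add₀ two_ne_zero]
    congr 1; ring

lemma mem_ImZ_of_mem_Im {k : ℕ} {x : ℝ} (hx : x ∈ Im k) (ω : Om) (m : ℕ) :
    (2:ℝ) ^ (-W ω m) * x ∈ ImZ (k + W ω m) :=
  (mul_mem_ImZ_iff _ _).mpr (Im_eq_ImZ k ▸ hx)

lemma mem_J_iff_of_mem_ImZ {z : ℤ} (hz : 0 ≤ z) {y : ℝ} (hy : y ∈ ImZ z) : y ∈ J ↔ z = 0 := by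
  refine ⟨fun hJ => ?_, fun h => ImZ_zero_subset_J (h ▸ hy)⟩
  by_contra h
  exact disjoint_left.mp disjoint_J_Rm hJ (ImZ_subset_Rm (by omega) hy)

lemma mem_Jt_iff {q : Om × ℝ} : q ∈ Jt ↔ q.2 ∈ J := by simp [Jt]

lemma Ttilde_iterate_notMem_of_mem_Jn {q : Om × ℝ} {n : ℕ} (hq : q ∈ Jn n) :
    ∀ m < n, Ttilde^[m] q ∉ Jt
  | 0, _ => hq.1
  | m + 1, hm => hq.2.2 (m + 1) (by omega) hm

section Ladder

variable {k : ℕ} {x : ℝ} {ω : Om}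

lemma Ttilde_iterate_of_mem_Im (hx : x ∈ Im k) {m : ℕ} (h : ∀ j < m, -(k:ℤ) < W ω j) :
    Ttilde^[m] (ω, x) = (shift m ω, (2:ℝ) ^ (-W ω m) * x) :=
  Ttilde_iterate_of_lt_half fun j hj =>
    lt_half_of_mem_ImZ (by linarith [h j hj]) (mem_ImZ_of_mem_Im hx ω j)

lemma Ttilde_iterate_mem_Jt_iff (hx : x ∈ Im k) {m : ℕ} (h : ∀ j < m, -(k:ℤ) < W ω j) :
    Ttilde^[m] (ω, x) ∈ Jt ↔ W ω m = -k := by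
  rw [Ttilde_iterate_of_mem_Im hx h, mem_Jt_iff,
    mem_J_iff_of_mem_ImZ (by linarith [neg_le_W_of_forall_lt h]) (mem_ImZ_of_mem_Im hx ω m)]
  omega

lemma mem_Jn_iff_mem_hitW (hk : 1 ≤ k) (hx : x ∈ Im k) {n : ℕ} : (ω, x) ∈ Jn n ↔ ω ∈ hitW k n := by
  constructor
  · intro hq
    have hout := Ttilde_iterate_notMem_of_mem_Jn hq
    have habove : ∀ m ≤ n, ∀ j < m, -(k:ℤ) < W ω j := by
      intro m
      induction m with
      | zero => intro _ j hj; omega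
      | succ m ih =>
        intro hm j hj
        rcases Nat.lt_succ_iff_lt_or_eq.mp hj with hj | rfl
        · exact ih (by omega) j hj
        · have hne := mt (Ttilde_iterate_mem_Jt_iff hx (ih (by omega))).mpr (hout j (by omega))
          exact lt_of_le_of_ne (neg_le_W_of_forall_lt (ih (by omega))) (Ne.symm hne)
    exact ⟨(Ttilde_iterate_mem_Jt_iff hx (habove n le_rfl)).mp hq.2.1,
      fun m _ hmn => (habove n le_rfl m hmn).ne'⟩
  · intro hω
    have habove := forall_lt_of_mem_hitW hk hω
    have hn : 0 < n := Nat.pos_of_ne_zero fun h => by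
      have := hω.1; rw [h, W_zero] at this; omega
    have hout : ∀ m < n, Ttilde^[m] (ω, x) ∉ Jt := fun m hmn h =>
      (habove m hmn).ne' ((Ttilde_iterate_mem_Jt_iff hx fun j hj => habove j (hj.trans hmn)).mp h)
    exact ⟨hout 0 hn, (Ttilde_iterate_mem_Jt_iff hx habove).mpr hω.1,
      fun m _ hmn => hout m hmn⟩

lemma Ttilde_iterate_of_mem_hitW (hk : 1 ≤ k) (hx : x ∈ Im k) {n : ℕ} (hω : ω ∈ hitW k n) :
    Ttilde^[n] (ω, x) = (shift n ω, (2:ℝ) ^ k * x) := by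
  rw [Ttilde_iterate_of_mem_Im hx (forall_lt_of_mem_hitW hk hω), hω.1, neg_neg, zpow_natCast]

end Ladder

lemma prod_muH_compl_hataSupport (P : Measure Om) : (P.prod muH) (univ ×ˢ hataSupport)ᶜ = 0 := by
  rw [show (univ ×ˢ hataSupport)ᶜ = (univ : Set Om) ×ˢ hataSupportᶜ by ext; simp,
    Measure.prod_prod, muH_compl_hataSupport, mul_zero]

lemma exists_mem_Im_succ {x : ℝ} (hs : x ∈ hataSupport) (hx : x ∈ Rm) : ∃ k, x ∈ Im (k + 1) := by
  rcases mem_hataSupport_cases hs with h | h | ⟨k, h⟩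
  · exact absurd hx <| disjoint_left.mp disjoint_J_Rm <|
      h.elim (Im_zero_subset_J ·) (Ip_zero_subset_J ·)
  · exact h
  · exact absurd (Ip_succ_subset_Rp k h) (disjoint_left.mp disjoint_Rm_Rp hx)

lemma minus_part_inter_hataSupport (n : ℕ) (A : Set Om) (B : Set ℝ) :
    Jn n ∩ univ ×ˢ Rm ∩ Ttilde^[n] ⁻¹' (A ×ˢ B) ∩ univ ×ˢ hataSupport
      = ⋃ k : ℕ, (hitW (k + 1) n ∩ shift n ⁻¹' A) ×ˢ
          (Im (k + 1) ∩ (fun x : ℝ => (2:ℝ) ^ (k + 1) * x) ⁻¹' B) := by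
  ext ⟨ω, x⟩
  simp only [mem_inter_iff, mem_prod, mem_univ, true_and, mem_preimage, mem_iUnion]
  constructor
  · rintro ⟨⟨⟨hJn, hx⟩, hT⟩, hs⟩
    obtain ⟨k, hk⟩ := exists_mem_Im_succ hs hx
    have hω := (mem_Jn_iff_mem_hitW (by omega) hk).mp hJn
    rw [Ttilde_iterate_of_mem_hitW (by omega) hk hω] at hT
    exact ⟨k, ⟨hω, hT.1⟩, hk, hT.2⟩
  · rintro ⟨k, ⟨hω, hA⟩, hk, hB⟩
    refine ⟨⟨⟨(mem_Jn_iff_mem_hitW (by omega) hk).mpr hω, Im_succ_subset_Rm k hk⟩, ?_⟩,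
      mem_iUnion.mpr ⟨k + 1, Or.inl hk⟩⟩
    rw [Ttilde_iterate_of_mem_hitW (by omega) hk hω]
    exact ⟨hA, hB⟩

lemma measure_minus_part {P : Measure Om} [IsFiniteMeasure P] (hP : IsFairCoin P) (n : ℕ)
    {A : Set Om} (hA : MeasurableSet A) {B : Set ℝ} (hB : MeasurableSet B) :
    (P.prod muH) (Jn n ∩ univ ×ˢ Rm ∩ Ttilde^[n] ⁻¹' (A ×ˢ B)) = cH P n * P A * muH (B ∩ Im 0) := by
  rw [← measure_inter_conull (prod_muH_compl_hataSupport P), minus_part_inter_hataSupport,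
    measure_iUnion]
  · simp only [Measure.prod_prod, hP.measure_inter_shift (dependsOn_hitW _ n) hA,
      muH_Im_inter_preimage_mul _ hB, cH, ← ENNReal.tsum_mul_right]
    congr 1 with k
    ring
  · exact fun i j hij => disjoint_prod.mpr <| Or.inl <| disjoint_left.mpr fun ω hi hj =>
      hij (by have := hi.1.1.symm.trans hj.1.1; omega)
  · exact fun k => ((measurableSet_of_dependsOn (dependsOn_hitW _ n)).inter
      (measurable_shift n hA)).prod (measurableSet_Ioo.inter (measurable_const_mul _ hB))

/-- Conjugates `τ₁` to `τ₂` away from `x = 1/2`, and exchanges `R^-` with `R^+`. -/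
def mirror (q : Om × ℝ) : Om × ℝ := (fun i => !q.1 i, 1 - q.2)

lemma mirror_involutive : Function.Involutive mirror := fun q => by
  simp [mirror]

lemma measurable_mirror : Measurable mirror := by
  unfold mirror; fun_prop

lemma sel_not_one_sub (b : Bool) {y : ℝ} (hy : y ≠ 1 / 2) : sel (!b) (1 - y) = 1 - sel b y := by
  rcases hy.lt_or_gt with h | h
  · have h' : ¬ 1 - y < 1 / 2 := by linarith
    cases b <;> simp only [sel, tau1, tau2, Bool.not_true, Bool.not_false, if_pos h, if_neg h',
      Bool.false_eq_true, if_true, if_false] <;> ring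
  · have h' : 1 - y < 1 / 2 := by linarith
    have h'' : ¬ y < 1 / 2 := by linarith
    cases b <;> simp only [sel, tau1, tau2, Bool.not_true, Bool.not_false, if_pos h', if_neg h'',
      Bool.false_eq_true, if_true, if_false] <;> ring

lemma Ttilde_mirror {q : Om × ℝ} (hq : q.2 ≠ 1 / 2) : Ttilde (mirror q) = mirror (Ttilde q) :=
  Prod.ext rfl (sel_not_one_sub _ hq)

lemma Ttilde_iterate_mirror {q : Om × ℝ} {m : ℕ} (h : ∀ j < m, (Ttilde^[j] q).2 ≠ 1 / 2) :
    Ttilde^[m] (mirror q) = mirror (Ttilde^[m] q) := by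
  induction m with
  | zero => rfl
  | succ m ih =>
    rw [Function.iterate_succ_apply', Function.iterate_succ_apply', ih fun j hj => h j (by omega),
      Ttilde_mirror (h m m.lt_succ_self)]

lemma mirror_mem_Jt {q : Om × ℝ} : mirror q ∈ Jt ↔ q ∈ Jt := by
  simp only [mem_Jt_iff, mirror, one_sub_mem_J_iff]

lemma Ttilde_iterate_mirror_of_mem_Jn {q : Om × ℝ} {n : ℕ} (hq : q ∈ Jn n) {m : ℕ} (hm : m ≤ n) :
    Ttilde^[m] (mirror q) = mirror (Ttilde^[m] q) :=
  Ttilde_iterate_mirror fun j hj h =>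
    Ttilde_iterate_notMem_of_mem_Jn hq j (by omega) (mem_Jt_iff.mpr (by rw [h]; norm_num [J]))

lemma mirror_mem_Jn_of_mem {q : Om × ℝ} {n : ℕ} (hq : q ∈ Jn n) : mirror q ∈ Jn n := by
  refine ⟨mirror_mem_Jt.not.mpr hq.1, ?_, fun m hm1 hmn => ?_⟩
  · rw [Ttilde_iterate_mirror_of_mem_Jn hq le_rfl, mirror_mem_Jt]
    exact hq.2.1
  · rw [Ttilde_iterate_mirror_of_mem_Jn hq hmn.le, mirror_mem_Jt]
    exact hq.2.2 m hm1 hmn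

lemma mirror_mem_Jn {q : Om × ℝ} {n : ℕ} : mirror q ∈ Jn n ↔ q ∈ Jn n :=
  ⟨fun h => mirror_involutive q ▸ mirror_mem_Jn_of_mem h, mirror_mem_Jn_of_mem⟩

lemma mirror_preimage_minus_part (n : ℕ) (A : Set Om) (B : Set ℝ) :
    mirror ⁻¹' (Jn n ∩ univ ×ˢ Rm ∩ Ttilde^[n] ⁻¹' (mirror ⁻¹' (A ×ˢ B)))
      = Jn n ∩ univ ×ˢ Rp ∩ Ttilde^[n] ⁻¹' (A ×ˢ B) := by
  ext q
  by_cases hq : q ∈ Jn n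
  · simp only [mem_preimage, mem_inter_iff, mirror_mem_Jn, hq, true_and,
      Ttilde_iterate_mirror_of_mem_Jn hq le_rfl, mirror_involutive _, mem_prod, mem_univ]
    rw [mirror, one_sub_mem_Rm_iff]
  · simp [hq, mirror_mem_Jn]

lemma measurePreserving_mirror {P : Measure Om} [IsFiniteMeasure P] (hP : IsFairCoin P) :
    MeasurePreserving mirror (P.prod muH) (P.prod muH) :=
  hP.measurePreserving_not.prod measurePreserving_one_sub_muH

lemma measure_plus_part {P : Measure Om} [IsFiniteMeasure P] (hP : IsFairCoin P) (n : ℕ)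
    {A : Set Om} (hA : MeasurableSet A) {B : Set ℝ} (hB : MeasurableSet B) :
    (P.prod muH) (Jn n ∩ univ ×ˢ Rp ∩ Ttilde^[n] ⁻¹' (A ×ˢ B)) = cH P n * P A * muH (B ∩ Ip 0) := by
  have hmirror : MeasurePreserving (MeasurableEquiv.ofInvolutive mirror mirror_involutive
      measurable_mirror) (P.prod muH) (P.prod muH) := measurePreserving_mirror hP
  have hB' : (fun x : ℝ => 1 - x) ⁻¹' B ∩ Im 0 = (fun x : ℝ => 1 - x) ⁻¹' (B ∩ Ip 0) := by
    ext x; simp [mem_Ip_iff (x := 1 - x)]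
  rw [← mirror_preimage_minus_part]
  refine (hmirror.measure_preimage_equiv _).trans ?_
  rw [show mirror ⁻¹' (A ×ˢ B) = ((fun (ω : Om) i => !ω i) ⁻¹' A) ×ˢ ((fun x : ℝ => 1 - x) ⁻¹' B)
      from rfl,
    measure_minus_part hP n (hP.measurePreserving_not.measurable hA)
      (measurePreserving_one_sub_muH.measurable hB),
    hP.measurePreserving_not.measure_preimage hA.nullMeasurableSet, hB',
    measurePreserving_one_sub_muH.measure_preimage (s := B ∩ Ip 0)
      (hB.inter measurableSet_Ioo).nullMeasurableSet]

lemma mem_Rp_of_mem_hataSupport {x : ℝ} (hs : x ∈ hataSupport) (hJ : x ∉ J) (hR : x ∉ Rm) :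
    x ∈ Rp := by
  rcases mem_hataSupport_cases hs with h | ⟨k, h⟩ | ⟨k, h⟩
  · exact absurd (h.elim (Im_zero_subset_J ·) (Ip_zero_subset_J ·)) hJ
  · exact absurd (Im_succ_subset_Rm k h) hR
  · exact Ip_succ_subset_Rp k h

lemma measure_Jn_inter_preimage_eq_add (P : Measure Om) (n : ℕ) (A : Set Om) (B : Set ℝ) :
    (P.prod muH) (Jn n ∩ Ttilde^[n] ⁻¹' (A ×ˢ B))
      = (P.prod muH) (Jn n ∩ univ ×ˢ Rm ∩ Ttilde^[n] ⁻¹' (A ×ˢ B))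
        + (P.prod muH) (Jn n ∩ univ ×ˢ Rp ∩ Ttilde^[n] ⁻¹' (A ×ˢ B)) := by
  have hRm : MeasurableSet ((univ : Set Om) ×ˢ Rm) := MeasurableSet.univ.prod measurableSet_Ioo
  rw [← measure_inter_add_sdiff _ hRm, inter_right_comm]
  congr 1
  rw [← measure_inter_conull (prod_muH_compl_hataSupport P),
    ← measure_inter_conull (prod_muH_compl_hataSupport P) (s := Jn n ∩ univ ×ˢ Rp ∩ _)]
  congr 1
  ext ⟨ω, x⟩
  simp only [mem_inter_iff, mem_sdiff, mem_prod, mem_univ, true_and, mem_preimage]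
  constructor
  · rintro ⟨⟨⟨hq, hT⟩, hR⟩, hs⟩
    exact ⟨⟨⟨hq, mem_Rp_of_mem_hataSupport hs (mem_Jt_iff.not.mp hq.1) hR⟩, hT⟩, hs⟩
  · rintro ⟨⟨⟨hq, hR⟩, hT⟩, hs⟩
    exact ⟨⟨⟨hq, hT⟩, disjoint_right.mp disjoint_Rm_Rp hR⟩, hs⟩

lemma muH_inter_J {B : Set ℝ} (hB : MeasurableSet B) :
    muH (B ∩ J) = muH (B ∩ Im 0) + muH (B ∩ Ip 0) := by
  rw [← measure_inter_conull muH_compl_hataSupport, ← measure_union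
    ((disjoint_Im_Ip 0 0).mono inter_subset_right inter_subset_right) (hB.inter measurableSet_Ioo)]
  congr 1
  ext x
  simp only [mem_inter_iff, mem_union, ← and_or_left]
  constructor
  · rintro ⟨⟨hB, hJ⟩, hs⟩
    refine ⟨hB, (mem_hataSupport_cases hs).resolve_right ?_⟩
    rintro (⟨k, h⟩ | ⟨k, h⟩)
    · exact disjoint_left.mp disjoint_J_Rm hJ (Im_succ_subset_Rm k h)
    · exact disjoint_left.mp disjoint_J_Rp hJ (Ip_succ_subset_Rp k h)
  · rintro ⟨hB, h⟩
    exact ⟨⟨hB, h.elim (Im_zero_subset_J ·) (Ip_zero_subset_J ·)⟩, mem_iUnion.mpr ⟨0, h⟩⟩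

theorem hata_skew_perron_frobenius_general (P : Measure Om) [IsProbabilityMeasure P]
    (hP : ∀ (n : ℕ) (f : ℕ → Bool), P {ω : Om | ∀ i < n, ω i = f i} = (1/2 : ℝ≥0∞)^n)
    (muT : Measure (Om × ℝ)) (hmuT : muT = P.prod muH)
    (n : ℕ)
    (A : Set Om) (hA : MeasurableSet A) (B : Set ℝ) (hB : MeasurableSet B) :
    muT (Jn n ∩ (Set.univ ×ˢ Rm) ∩ Ttilde^[n] ⁻¹' (A ×ˢ B)) = cH P n * P A * muH (B ∩ Im 0)
    ∧ muT (Jn n ∩ (Set.univ ×ˢ Rp) ∩ Ttilde^[n] ⁻¹' (A ×ˢ B)) = cH P n * P A * muH (B ∩ Ip 0)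
    ∧ muT (Jn n ∩ Ttilde^[n] ⁻¹' (A ×ˢ B)) = cH P n * P A * muH (B ∩ J) := by
  subst hmuT
  have hminus := measure_minus_part hP n hA hB
  have hplus := measure_plus_part hP n hA hB
  refine ⟨hminus, hplus, ?_⟩
  rw [measure_Jn_inter_preimage_eq_add, hminus, hplus, muH_inter_J hB, mul_add]

/-- For the Hata skew product with `p = 1/2` and every `n ≥ 1`, every measurable `A ⊆ Ω` and
Borel `B ⊆ [0,1]`, `μ̃(J̃_n ∩ R̃^± ∩ T̃^{-n}(A×B)) = c_n·P(A)·μ(B ∩ I_0^±)`, and consequently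
`μ̃(J̃_n ∩ T̃^{-n}(A×B)) = c_n·P(A)·μ(B ∩ J)`. -/
theorem hata_skew_perron_frobenius (P : Measure Om) [IsProbabilityMeasure P]
    (hP : ∀ (n : ℕ) (f : ℕ → Bool), P {ω : Om | ∀ i < n, ω i = f i} = (1/2 : ℝ≥0∞)^n)
    (muT : Measure (Om × ℝ)) (hmuT : muT = P.prod muH)
    (n : ℕ) (hn : 1 ≤ n)
    (A : Set Om) (hA : MeasurableSet A) (B : Set ℝ) (hB : MeasurableSet B) :
    muT (Jn n ∩ (Set.univ ×ˢ Rm) ∩ Ttilde^[n] ⁻¹' (A ×ˢ B)) = cH P n * P A * muH (B ∩ Im 0)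
    ∧ muT (Jn n ∩ (Set.univ ×ˢ Rp) ∩ Ttilde^[n] ⁻¹' (A ×ˢ B)) = cH P n * P A * muH (B ∩ Ip 0)
    ∧ muT (Jn n ∩ Ttilde^[n] ⁻¹' (A ×ˢ B)) = cH P n * P A * muH (B ∩ J) :=
  hata_skew_perron_frobenius_general P hP muT hmuT n A hA B hB

end
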